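/- Skewness bound in Zolotarev's parametrization: Let η be a real number with |η| < 1 and set θ = −cot(πα/2)·tan(πη/2). If 1 < α < 2, then |θ| ≤ 1 holds if and only if |η| ≤ 2 − α; if 0 < α < 1, then |θ| ≤ 1 holds if and only if |η| ≤ α. -/
import Mathlib


open Real

lemma cot_eq_tan_pds (x : ℝ) : Real.cot x = Real.tan (Real.pi/2 - x) := by
  rw [Real.tan_pi_div_two_sub, Real.cot_eq_cos_div_sin, Real.tan_eq_sin_div_cos, inv_div]

lemma key (a b : ℝ) (ha0 : 0 < a) (ha1 : a < Real.pi/2) (hb0 : 0 ≤ b) (hb1 : b < Real.pi/2) :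
    Real.tan a * Real.tan b ≤ 1 ↔ b ≤ Real.pi/2 - a := by
  have hta : 0 < Real.tan a := Real.tan_pos_of_pos_of_lt_pi_div_two ha0 ha1
  have h1 : Real.tan a * Real.tan b ≤ 1 ↔ Real.tan b ≤ Real.tan (Real.pi/2 - a) := by
    rw [Real.tan_pi_div_two_sub, ← one_div, le_div_iff₀ hta, mul_comm]
  rw [h1]
  have hpi := Real.pi_pos
  constructor
  · intro h
    by_contra hc
    push_neg at hc
    have := Real.strictMonoOn_tan  ⟨by linarith, by linarith⟩ ⟨by linarith, hb1⟩ hc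
    linarith
  · intro h
    rcases eq_or_lt_of_le h with h | h
    · rw [h]
    · exact le_of_lt (Real.strictMonoOn_tan ⟨by linarith, hb1⟩ ⟨by linarith, by linarith⟩ h)

/-- Skewness bound in Zolotarev's parametrization. -/
theorem skewness_bound (α η θ : ℝ) (hη : |η| < 1)
    (hθ : θ = -Real.cot (Real.pi * α / 2) * Real.tan (Real.pi * η / 2)) :
    ((1 < α ∧ α < 2) → (|θ| ≤ 1 ↔ |η| ≤ 2 - α)) ∧
    ((0 < α ∧ α < 1) → (|θ| ≤ 1 ↔ |η| ≤ α)) := by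
  have hpi := Real.pi_pos
  have habs : |Real.tan (Real.pi * η / 2)| = Real.tan (Real.pi * |η| / 2) := by
    rcases abs_cases η with ⟨h1, h2⟩ | ⟨h1, h2⟩
    · rw [h1, abs_of_nonneg (Real.tan_nonneg_of_nonneg_of_le_pi_div_two (by positivity)
        (by nlinarith [abs_nonneg η, hη]))]
    · rw [h1]
      have : Real.pi * -η / 2 = -(Real.pi * η / 2) := by ring
      rw [this, Real.tan_neg, abs_of_nonpos]
      have : Real.tan (Real.pi * η / 2) ≤ 0 := by
        apply Real.tan_nonpos_of_nonpos_of_neg_pi_div_two_le (by nlinarith) (by nlinarith)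
      linarith
  constructor
  · rintro ⟨h1, h2⟩
    have hcot : -Real.cot (Real.pi * α / 2) = Real.tan (Real.pi * (α - 1) / 2) := by
      rw [cot_eq_tan_pds]
      have : Real.pi/2 - Real.pi * α / 2 = -(Real.pi * (α-1) / 2) := by ring
      rw [this, Real.tan_neg, neg_neg]
    have hθabs : |θ| = Real.tan (Real.pi * (α-1)/2) * Real.tan (Real.pi * |η| / 2) := by
      rw [hθ, hcot, abs_mul, habs, abs_of_nonneg (Real.tan_nonneg_of_nonneg_of_le_pi_div_two
        (by nlinarith) (by nlinarith))]
    rw [hθabs, key _ _ (by nlinarith) (by nlinarith) (by positivity)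
      (by nlinarith [abs_nonneg η, hη])]
    constructor <;> intro h <;> nlinarith
  · rintro ⟨h1, h2⟩
    have hcot : -Real.cot (Real.pi * α / 2) = -Real.tan (Real.pi * (1 - α) / 2) := by
      rw [cot_eq_tan_pds]
      have : Real.pi/2 - Real.pi * α / 2 = Real.pi * (1-α) / 2 := by ring
      rw [this]
    have hθabs : |θ| = Real.tan (Real.pi * (1-α)/2) * Real.tan (Real.pi * |η| / 2) := by
      rw [hθ, hcot, neg_mul, abs_neg, abs_mul, habs,
        abs_of_nonneg (Real.tan_nonneg_of_nonneg_of_le_pi_div_two (by nlinarith) (by nlinarith))]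
    rw [hθabs, key _ _ (by nlinarith) (by nlinarith) (by positivity)
      (by nlinarith [abs_nonneg η, hη])]
    constructor <;> intro h <;> nlinarith
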